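/- Let λ be a nonzero real number and m a positive integer. For every n ≥ 0, the degenerate Bernoulli polynomials satisfy β_{n,λ}(x) = Σ_{k=0}^{n} { Σ_{l=0}^{n} Σ_{j=k}^{l} Σ_{i=0}^{l−j} C(n,l) C(l,j) β_{n−l,λ} S_{1,λ/m}(j,k) m^{l−k−i} (−1)^i S_1(l−j,i) } d_{m,λ}(k,x) as polynomials in x, where C(·,·) denotes binomial coefficients. -/

import Mathlib

open Nat PowerSeries Finset

noncomputable section

/-- λ-falling factorial (x)_{n,λ} = x(x−λ)···(x−(n−1)λ). -/
def dfall (l x : ℝ) (n : ℕ) : ℝ := ∏ i ∈ range n, (x - i * l)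

/-- degenerate exponential e_λ^x(t) = Σ (x)_{n,λ} t^n/n! as a formal power series. -/
def degExp (l x : ℝ) : PowerSeries ℝ := PowerSeries.mk fun n => dfall l x n / n !

/-- degenerate logarithm log_λ(1+t) = Σ_{n≥1} (∏_{j=1}^{n−1}(λ−j)) t^n/n!. -/
def degLog (l : ℝ) : PowerSeries ℝ :=
  PowerSeries.mk fun n => if n = 0 then 0 else (∏ j ∈ range (n - 1), (l - (j + 1))) / n !

/-- composition Σ_k a_k f^k, valid when f has zero constant term. -/
def psComp (a : ℕ → ℝ) (f : PowerSeries ℝ) : PowerSeries ℝ :=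
  PowerSeries.mk fun n => ∑ k ∈ range (n + 1), a k * PowerSeries.coeff n (f ^ k)

/-- e_λ^x(f), the degenerate exponential composed with f (f with zero constant term). -/
def degExpComp (l x : ℝ) (f : PowerSeries ℝ) : PowerSeries ℝ :=
  psComp (fun k => dfall l x k / k !) f

/-- degenerate Stirling numbers of the second kind. -/
def dS2 (l : ℝ) (n k : ℕ) : ℝ :=
  (n ! : ℝ) / k ! * PowerSeries.coeff n ((degExp l 1 - 1) ^ k)

/-- degenerate Stirling numbers of the first kind. -/
def dS1 (l : ℝ) (n k : ℕ) : ℝ :=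
  (n ! : ℝ) / k ! * PowerSeries.coeff n (degLog l ^ k)

/-- (signed) Stirling numbers of the first kind: coefficients of x(x-1)···(x-n+1). -/
def sS1 (n k : ℕ) : ℝ := (descPochhammer ℝ n).coeff k

/-- fully degenerate Bell polynomial φ_{n,λ}(x). -/
def dBell (l : ℝ) (n : ℕ) (x : ℝ) : ℝ := ∑ k ∈ range (n + 1), dS2 l n k * dfall l x k

/-- degenerate Whitney numbers of the second kind. -/
def dW (m : ℕ) (l : ℝ) (n k : ℕ) : ℝ :=
  (n ! : ℝ) / k ! *
    PowerSeries.coeff n (degExp l 1 * ((degExp l (m : ℝ) - 1) * PowerSeries.C (R := ℝ) (1 / m)) ^ k)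

/-- fully degenerate Dowling polynomial d_{m,λ}(n,x). -/
def dDowling (m : ℕ) (l : ℝ) (n : ℕ) (x : ℝ) : ℝ :=
  ∑ k ∈ range (n + 1), dW m l n k * dfall l x k

/-- division of a power series by t (coefficient shift). -/
def divT (f : PowerSeries ℝ) : PowerSeries ℝ :=
  PowerSeries.mk fun n => PowerSeries.coeff (n + 1) f

/-- degenerate Bernoulli polynomials β_{n,λ}(x): (t/(e_λ(t)−1)) e_λ^x(t) = Σ β_{n,λ}(x) tⁿ/n!. -/
def dBernoulliPoly (l : ℝ) (n : ℕ) (x : ℝ) : ℝ :=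
  (n ! : ℝ) * PowerSeries.coeff n ((divT (degExp l 1 - 1))⁻¹ * degExp l x)

/-- the λ-falling factorial polynomial (x)_{k,λ}. -/
def dfallPoly (l : ℝ) (k : ℕ) : Polynomial ℝ :=
  ∏ i ∈ range k, (Polynomial.X - Polynomial.C (i * l))

/-- degenerate poly-Bell polynomials B^{(r)}_{n,λ}(x). -/
def dPolyBell (r : ℤ) (l : ℝ) (n : ℕ) (x : ℝ) : ℝ :=
  (n ! : ℝ) * PowerSeries.coeff n
    (divT (psComp (fun k => if k = 0 then 0 else dfall l 1 k / ((k - 1)! * (k : ℝ) ^ r))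
        (degLog l)) *
      (divT (degExp l 1 - 1))⁻¹ * degExp l x)

/-- degenerate Bernoulli polynomials of the second kind b_{n,λ}(x). -/
def dBern2 (l : ℝ) (n : ℕ) (x : ℝ) : ℝ :=
  (n ! : ℝ) *
    PowerSeries.coeff n ((divT (degLog l))⁻¹ * PowerSeries.mk fun j => dfall 1 x j / j !)

/-!
Put `f(t) = (e_λ^m(t) - 1)/m`. The Dowling polynomials have exponential generating function
`e_λ(t) e_λ^x(f(t))`, and `f` has the compositional inverse `G(t) = (1/m) log_{λ/m}(1 + m t)`:
indeed `e_λ^{m x}(G(t)) = (1 + m t)^x`, which comes from `e_μ^x(log_μ(1 + t)) = (1 + t)^x`.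
Substituting `G`, where `e_λ(G(t)) = e_m(t)`, gives
`e_λ^x(t) = e_m^{-1}(t) Σ_k d_{m,λ}(k,x) G(t)^k / k!`. Multiplying by `t/(e_λ(t) - 1)` and
comparing coefficients of `t^n` yields the formula, the bracket being the Cauchy product expansion
of `n!/k!` times the coefficient of `t^n` in `t/(e_λ(t) - 1) · e_m^{-1}(t) · G(t)^k`, with
`(-1)_{q,m} = Σ_i m^{q-i} (-1)^i S_1(q,i)`.
-/

namespace PowerSeries

theorem coeff_mul_subst {R : Type*} [CommRing R] {G : R⟦X⟧} (hG : constantCoeff G = 0)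
    (C D : R⟦X⟧) (n : ℕ) :
    coeff n (C * D.subst G) = ∑ k ∈ range (n + 1), coeff k D * coeff n (C * G ^ k) := by
  have hsub : HasSubst G := HasSubst.of_constantCoeff_zero' hG
  have htail : coeff n (C * G ^ (n + 1) * (mk fun i ↦ coeff (i + (n + 1)) D).subst G) = 0 := by
    obtain ⟨H, hH⟩ : X ^ (n + 1) ∣ G ^ (n + 1) := pow_dvd_pow_of_dvd (X_dvd_iff.mpr hG) _
    rw [hH, mul_comm C, mul_assoc, mul_assoc, coeff_X_pow_mul', if_neg (by omega)]
  conv_lhs => rw [eq_X_pow_mul_shift_add_trunc (n + 1) D]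
  rw [subst_add hsub, subst_mul hsub, subst_pow hsub, subst_X hsub, subst_coe hsub,
    Polynomial.aeval_eq_sum_range' (natDegree_trunc_lt D n), mul_add, ← mul_assoc, map_add,
    htail, zero_add, Finset.mul_sum, map_sum]
  refine Finset.sum_congr rfl fun k hk ↦ ?_
  rw [coeff_trunc, if_pos (Finset.mem_range.mp hk), mul_smul_comm, coeff_smul, smul_eq_mul]

theorem coeff_subst_eq_sum {R : Type*} [CommRing R] {G : R⟦X⟧} (hG : constantCoeff G = 0)
    (D : R⟦X⟧) (n : ℕ) :
    coeff n (D.subst G) = ∑ k ∈ range (n + 1), coeff k D * coeff n (G ^ k) := by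
  simpa using coeff_mul_subst hG 1 D n

theorem factorial_mul_coeff_mul {R : Type*} [CommSemiring R] (f g : R⟦X⟧) (n : ℕ) :
    n ! * coeff n (f * g) =
      ∑ a ∈ range (n + 1), n.choose a * ((n - a)! * coeff (n - a) f) * (a ! * coeff a g) := by
  rw [mul_comm f, coeff_mul, Nat.sum_antidiagonal_eq_sum_range_succ_mk, mul_sum]
  refine sum_congr rfl fun a ha ↦ ?_
  rw [← Nat.choose_mul_factorial_mul_factorial (Nat.le_of_lt_succ (mem_range.mp ha))]
  push_cast
  ring

end PowerSeries

theorem dfall_succ (l x : ℝ) (n : ℕ) : dfall l x (n + 1) = dfall l x n * (x - n * l) :=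
  prod_range_succ _ _

theorem dfall_add (a x y : ℝ) (n : ℕ) :
    dfall a (x + y) n =
      ∑ ij ∈ antidiagonal n, n.choose ij.1 * (dfall a x ij.1 * dfall a y ij.2) := by
  induction n with
  | zero => simp [dfall]
  | succ n ih =>
    rw [dfall_succ, ih, Finset.sum_mul, sum_antidiagonal_choose_succ_mul
      (fun i j ↦ dfall a x i * dfall a y j), ← Finset.sum_add_distrib]
    refine Finset.sum_congr rfl fun ij hij ↦ ?_
    rw [HasAntidiagonal.mem_antidiagonal] at hij
    rw [← Nat.choose_symm_of_eq_add hij.symm, dfall_succ, dfall_succ, ← hij]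
    push_cast
    ring

theorem dfall_mul_left {c : ℝ} (hc : c ≠ 0) (l x : ℝ) (n : ℕ) :
    dfall l (c * x) n = c ^ n * dfall (l / c) x n := by
  rw [dfall, dfall, ← card_range n, ← prod_const, card_range, ← prod_mul_distrib]
  refine prod_congr rfl fun i _ ↦ ?_
  field_simp

theorem eval_dfallPoly (l t : ℝ) (k : ℕ) : (dfallPoly l k).eval t = dfall l t k := by
  simp [dfallPoly, dfall, Polynomial.eval_prod]

theorem eval_descPochhammer (z : ℝ) (q : ℕ) : (descPochhammer ℝ q).eval z = dfall 1 z q := by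
  induction q with
  | zero => simp [dfall]
  | succ q ih => rw [descPochhammer_succ_eval, ih, dfall_succ, mul_one]

theorem dfall_eq_sum_sS1 {c : ℝ} (hc : c ≠ 0) (y : ℝ) (q : ℕ) :
    dfall c y q = ∑ i ∈ range (q + 1), c ^ (q - i) * y ^ i * sS1 q i := by
  have h := dfall_mul_left hc c (y / c) q
  rw [mul_div_cancel₀ y hc, div_self hc, ← eval_descPochhammer,
    Polynomial.eval_eq_sum_range, descPochhammer_natDegree, mul_sum] at h
  rw [h]
  refine sum_congr rfl fun i hi ↦ ?_
  rw [sS1, div_pow, ← pow_sub_mul_pow c (Nat.le_of_lt_succ (mem_range.mp hi))]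
  field_simp

theorem coeff_degExp (l x : ℝ) (n : ℕ) : coeff n (degExp l x) = dfall l x n / n ! :=
  coeff_mk _ _

theorem degExp_add (a x y : ℝ) : degExp a (x + y) = degExp a x * degExp a y := by
  ext n
  rw [coeff_mul, coeff_degExp, dfall_add, Finset.sum_div]
  refine Finset.sum_congr rfl fun ij hij ↦ ?_
  rw [HasAntidiagonal.mem_antidiagonal] at hij
  rw [coeff_degExp, coeff_degExp, ← hij, Nat.cast_add_choose]
  field_simp

theorem degExp_zero (a : ℝ) : degExp a 0 = 1 := by
  ext n
  rcases n with _ | n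
  · simp [coeff_degExp, dfall]
  · rw [coeff_degExp, coeff_one, if_neg n.succ_ne_zero, dfall, prod_range_succ']
    simp

theorem degExp_pow (a x : ℝ) (j : ℕ) : degExp a x ^ j = degExp a (j * x) := by
  induction j with
  | zero => simp [degExp_zero]
  | succ j ih => rw [pow_succ, ih, ← degExp_add]; push_cast; ring_nf

theorem degExp_self (a : ℝ) : degExp a a = 1 + C a * X := by
  ext n
  rw [coeff_degExp, map_add, coeff_one, coeff_C_mul, coeff_X]
  match n with
  | 0 => simp [dfall]
  | 1 => simp [dfall]
  | n + 2 =>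
    have : dfall a a (n + 2) = 0 := prod_eq_zero (mem_range.mpr (by omega : 1 < n + 2)) (by simp)
    simp [this]

theorem degExp_one_left (a : ℝ) : degExp 1 a = 1 + C a * degLog a := by
  ext n
  rw [coeff_degExp, map_add, coeff_one, coeff_C_mul, degLog, coeff_mk]
  rcases n with _ | n
  · simp [dfall]
  · rw [if_neg n.succ_ne_zero, if_neg n.succ_ne_zero, dfall, prod_range_succ', Nat.add_sub_cancel]
    simp only [Nat.cast_add, Nat.cast_one, mul_one, CharP.cast_eq_zero, sub_zero]
    ring

theorem rescale_degExp {c : ℝ} (hc : c ≠ 0) (l x : ℝ) :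
    rescale c (degExp (l / c) x) = degExp l (c * x) := by
  ext n
  rw [coeff_rescale, coeff_degExp, coeff_degExp, dfall_mul_left hc]
  ring

theorem constantCoeff_degLog (a : ℝ) : constantCoeff (degLog a) = 0 := by
  simp [degLog, ← coeff_zero_eq_constantCoeff_apply]

theorem degExp_subst_degLog {a : ℝ} (ha : a ≠ 0) (x : ℝ) :
    (degExp a x).subst (degLog a) = degExp 1 x := by
  have hL := HasSubst.of_constantCoeff_zero' (constantCoeff_degLog a)
  have h_mul (j : ℕ) : (degExp a (j * a)).subst (degLog a) = degExp 1 (j * a) := by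
    rw [← degExp_pow, subst_pow hL, degExp_self, ← coe_substAlgHom hL, map_add, map_one, map_mul,
      substAlgHom_X, ← algebraMap_eq (R := ℝ), AlgHom.commutes, algebraMap_eq, ← degExp_one_left,
      degExp_pow]
  -- the coefficients of both sides are polynomials in `x` that agree at every `x = j a`
  ext n
  set P : Polynomial ℝ := ∑ k ∈ range (n + 1),
    Polynomial.C (coeff n (degLog a ^ k) / k !) * dfallPoly a k
  set Q : Polynomial ℝ := Polynomial.C ((n ! : ℝ)⁻¹) * dfallPoly 1 n
  have hP (t : ℝ) : P.eval t = coeff n ((degExp a t).subst (degLog a)) := by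
    simp only [P, coeff_subst_eq_sum (constantCoeff_degLog a), Polynomial.eval_finsetSum,
      Polynomial.eval_mul, Polynomial.eval_C, eval_dfallPoly, coeff_degExp]
    exact sum_congr rfl fun k _ ↦ by ring
  have hQ (t : ℝ) : Q.eval t = coeff n (degExp 1 t) := by
    simp only [Q, Polynomial.eval_mul, Polynomial.eval_C, eval_dfallPoly, coeff_degExp]
    ring
  have hPQ : P = Q := by
    have h_inj : Function.Injective fun j : ℕ ↦ (j : ℝ) * a := fun i j h ↦ by simpa [ha] using h
    refine P.eq_of_infinite_eval_eq Q ((Set.infinite_range_of_injective h_inj).mono ?_)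
    rintro _ ⟨j, rfl⟩
    simp only [Set.mem_ofPred_eq, hP, hQ, h_mul]
  rw [← hP, hPQ, hQ]

def whitneySeries (m : ℕ) (l : ℝ) : ℝ⟦X⟧ := (degExp l m - 1) * C (1 / (m : ℝ))

def whitneySeriesInv (m : ℕ) (l : ℝ) : ℝ⟦X⟧ := (m : ℝ)⁻¹ • rescale (m : ℝ) (degLog (l / m))

def dowlingSeries (m : ℕ) (l x : ℝ) : ℝ⟦X⟧ := degExp l 1 * (degExp l x).subst (whitneySeries m l)

def bernoulliSeries (l : ℝ) : ℝ⟦X⟧ := (divT (degExp l 1 - 1))⁻¹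

theorem constantCoeff_whitneySeries (m : ℕ) (l : ℝ) : constantCoeff (whitneySeries m l) = 0 := by
  rw [← coeff_zero_eq_constantCoeff_apply]
  simp [whitneySeries, degExp, dfall]

theorem constantCoeff_whitneySeriesInv (m : ℕ) (l : ℝ) :
    constantCoeff (whitneySeriesInv m l) = 0 := by
  rw [← coeff_zero_eq_constantCoeff_apply]
  simp [whitneySeriesInv, degLog]

theorem coeff_dowlingSeries (m : ℕ) (l x : ℝ) (k : ℕ) :
    coeff k (dowlingSeries m l x) = dDowling m l k x / k ! := by
  rw [dowlingSeries, coeff_mul_subst (constantCoeff_whitneySeries m l), dDowling, sum_div]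
  refine sum_congr rfl fun p _ ↦ ?_
  rw [coeff_degExp, dW, whitneySeries]
  field_simp

theorem dBernoulliPoly_eq (l : ℝ) (n : ℕ) (x : ℝ) :
    dBernoulliPoly l n x = n ! * coeff n (bernoulliSeries l * degExp l x) :=
  rfl

theorem dBernoulliPoly_zero (l : ℝ) (n : ℕ) :
    dBernoulliPoly l n 0 = n ! * coeff n (bernoulliSeries l) := by
  rw [dBernoulliPoly_eq, degExp_zero, mul_one]

section

variable {m : ℕ} (hm : 0 < m)
include hm

theorem degExp_subst_whitneySeriesInv {l : ℝ} (hl : l ≠ 0) (x : ℝ) :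
    (degExp l (m * x)).subst (whitneySeriesInv m l) = rescale (m : ℝ) (degExp 1 x) := by
  have hm' : (m : ℝ) ≠ 0 := by positivity
  have hG := HasSubst.of_constantCoeff_zero' (constantCoeff_whitneySeriesInv m l)
  have hmX := HasSubst.smul_X' (R := ℝ) (m : ℝ)
  have h_smul : ((m : ℝ) • X : ℝ⟦X⟧).subst (whitneySeriesInv m l) =
      (degLog (l / m)).subst ((m : ℝ) • X) := by
    rw [subst_smul hG, subst_X hG, whitneySeriesInv, smul_inv_smul₀ hm', rescale_eq_subst]
  rw [← rescale_degExp hm', rescale_eq_subst, subst_comp_subst_apply hmX hG, h_smul,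
    ← subst_comp_subst_apply (HasSubst.of_constantCoeff_zero' (constantCoeff_degLog _)) hmX,
    degExp_subst_degLog (div_ne_zero hl hm'), rescale_eq_subst]

theorem degExp_one_subst_whitneySeriesInv {l : ℝ} (hl : l ≠ 0) :
    (degExp l 1).subst (whitneySeriesInv m l) = degExp m 1 := by
  have hm' : (m : ℝ) ≠ 0 := by positivity
  have h := degExp_subst_whitneySeriesInv hm hl (m : ℝ)⁻¹
  rw [mul_inv_cancel₀ hm'] at h
  rw [h]
  simpa [hm'] using rescale_degExp hm' (m : ℝ) (m : ℝ)⁻¹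

theorem whitneySeries_subst_whitneySeriesInv {l : ℝ} (hl : l ≠ 0) :
    (whitneySeries m l).subst (whitneySeriesInv m l) = X := by
  have hm' : (m : ℝ) ≠ 0 := by positivity
  have hG := HasSubst.of_constantCoeff_zero' (constantCoeff_whitneySeriesInv m l)
  have h := degExp_subst_whitneySeriesInv hm hl 1
  rw [mul_one] at h
  rw [whitneySeries, ← coe_substAlgHom hG, map_mul, map_sub, map_one, ← algebraMap_eq (R := ℝ),
    AlgHom.commutes, algebraMap_eq, coe_substAlgHom, h, degExp_self, map_one, one_mul, map_add,
    map_one, rescale_X, add_sub_cancel_left, mul_right_comm, ← map_mul, mul_one_div_cancel hm',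
    map_one, one_mul]

theorem degExp_eq_mul_dowlingSeries_subst {l : ℝ} (hl : l ≠ 0) (x : ℝ) :
    degExp l x = degExp m (-1) * (dowlingSeries m l x).subst (whitneySeriesInv m l) := by
  have hF := HasSubst.of_constantCoeff_zero' (constantCoeff_whitneySeries m l)
  have hG := HasSubst.of_constantCoeff_zero' (constantCoeff_whitneySeriesInv m l)
  rw [dowlingSeries, subst_mul hG, degExp_one_subst_whitneySeriesInv hm hl,
    subst_comp_subst_apply hF hG, whitneySeries_subst_whitneySeriesInv hm hl, X_subst,
    ← mul_assoc, ← degExp_add, neg_add_cancel, degExp_zero, one_mul]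

theorem coeff_whitneySeriesInv_pow (l : ℝ) (j k : ℕ) :
    coeff j (whitneySeriesInv m l ^ k) = (m : ℝ) ^ j / m ^ k * (k ! / j ! * dS1 (l / m) j k) := by
  have hm' : (m : ℝ) ≠ 0 := by positivity
  rw [whitneySeriesInv, smul_pow, ← map_pow, coeff_smul, coeff_rescale, dS1, smul_eq_mul, inv_pow]
  field_simp

theorem sum_choose_mul_dS1_mul_sS1 (l : ℝ) {k a : ℕ} :
    ∑ j ∈ Icc k a, ∑ i ∈ range (a - j + 1),
        (a.choose j : ℝ) * dS1 (l / m) j k * (m : ℝ) ^ (a - k - i) * (-1 : ℝ) ^ i * sS1 (a - j) i =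
      a ! / k ! * coeff a (degExp m (-1) * whitneySeriesInv m l ^ k) := by
  have hm' : (m : ℝ) ≠ 0 := by positivity
  have hG := constantCoeff_whitneySeriesInv m l
  rw [mul_comm (degExp _ _), coeff_mul, Nat.sum_antidiagonal_eq_sum_range_succ_mk, mul_sum]
  symm
  have h_sub : Icc k a ⊆ range (a + 1) := fun j hj ↦ by
    simp only [mem_Icc, mem_range] at hj ⊢; omega
  refine (sum_subset h_sub fun j hja hj ↦ ?_).symm.trans (sum_congr rfl fun j hj ↦ ?_)
  · have hjk : j < k := by
      simp only [mem_Icc, mem_range, not_and_or, not_le] at hja hj; omega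
    rw [coeff_of_lt_order j ((Nat.cast_lt.mpr hjk).trans_le
      (le_order_pow_of_constantCoeff_eq_zero k hG)), zero_mul, mul_zero]
  obtain ⟨hkj, hja⟩ := mem_Icc.mp hj
  obtain ⟨r, rfl⟩ := Nat.exists_eq_add_of_le hkj
  obtain ⟨s, rfl⟩ := Nat.exists_eq_add_of_le hja
  simp only [Nat.add_sub_cancel_left]
  rw [coeff_whitneySeriesInv_pow hm, coeff_degExp, dfall_eq_sum_sS1 hm', sum_div, mul_sum, mul_sum]
  refine sum_congr rfl fun i hi ↦ ?_
  obtain ⟨t, rfl⟩ := Nat.exists_eq_add_of_le (Nat.le_of_lt_succ (mem_range.mp hi))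
  rw [Nat.cast_choose ℝ hja, Nat.add_sub_cancel_left, Nat.add_sub_cancel_left,
    show k + r + (i + t) - k - i = r + t by omega, pow_add, pow_add]
  field_simp

theorem factorial_div_mul_coeff_bernoulliSeries_mul (l : ℝ) (n k : ℕ) :
    n ! / k ! * coeff n (bernoulliSeries l * degExp m (-1) * whitneySeriesInv m l ^ k) =
      ∑ a ∈ range (n + 1), ∑ j ∈ Icc k a, ∑ i ∈ range (a - j + 1),
        n.choose a * a.choose j * dBernoulliPoly l (n - a) 0 * dS1 (l / m) j k *
          (m : ℝ) ^ (a - k - i) * (-1 : ℝ) ^ i * sS1 (a - j) i := by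
  rw [div_mul_eq_mul_div, mul_assoc, factorial_mul_coeff_mul, sum_div]
  refine sum_congr rfl fun a _ ↦ ?_
  rw [← dBernoulliPoly_zero, mul_div_assoc, mul_div_right_comm, ← sum_choose_mul_dS1_mul_sS1 hm,
    mul_sum]
  refine sum_congr rfl fun j _ ↦ ?_
  rw [mul_sum]
  exact sum_congr rfl fun i _ ↦ by ring

end

theorem stmt10 (l : ℝ) (hl : l ≠ 0) (m : ℕ) (hm : 0 < m) (n : ℕ) (x : ℝ) :
    dBernoulliPoly l n x =
      ∑ k ∈ range (n + 1),
        (∑ a ∈ range (n + 1), ∑ j ∈ Icc k a, ∑ i ∈ range (a - j + 1),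
            n.choose a * a.choose j * dBernoulliPoly l (n - a) 0 * dS1 (l / m) j k *
              (m : ℝ) ^ (a - k - i) * (-1 : ℝ) ^ i * sS1 (a - j) i) *
          dDowling m l k x := by
  rw [dBernoulliPoly_eq, degExp_eq_mul_dowlingSeries_subst hm hl x, ← mul_assoc,
    coeff_mul_subst (constantCoeff_whitneySeriesInv m l), mul_sum]
  refine sum_congr rfl fun k _ ↦ ?_
  rw [← factorial_div_mul_coeff_bernoulliSeries_mul hm, coeff_dowlingSeries]
  field_simp

end
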